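/- arXiv:2209.09887 — 4 statements merged into one kernel-verified Lean document; each statement's English description precedes it below -/
import Mathlib

section
/- Let ε > 0 and let S ⊆ 𝓑 satisfy |S| ≥ (1+ε)·M. Then the maximum degree of the subgraph of G induced on S is at least ε·s/|T|². -/
/-!
Weight each integer point `x` of `[0, s^k)^d` by the number `N x` of blocks of `S` containing it.
Every block of `𝓑` contains exactly `s^k` such points, and two distinct blocks that meet have
different shapes `t ≠ t'` (blocks of equal shape tile), so they share at most
`s^(∑ min (t i) (t' i)) ≤ s^(k-1)` points. Since `N ≤ 1 + N (N - 1)`, double counting gives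
`|S| s^k ≤ s^(kd) + s^(k-1) ∑_{B ∈ S} deg B`, i.e. `s |S| ≤ s M + |S| Δ` for the maximum
degree `Δ`. Together with `(1 + ε) M ≤ |S| ≤ |T| M` this yields `Δ ≥ ε s / |T|`.
-/

open scoped Classical

noncomputable section

/-- The `t`-block `B_t(p) = ∏_i [s^{t i}·p i, s^{t i}·(p i + 1))`. -/
def block (d s : ℕ) (t : Fin d → ℕ) (p : Fin d → ℤ) : Set (Fin d → ℝ) :=
  Set.univ.pi fun i =>
    Set.Ico ((s : ℝ) ^ t i * (p i : ℝ)) ((s : ℝ) ^ t i * ((p i : ℝ) + 1))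

/-- The family `𝓑` of all `t`-blocks with `∑ t i = k` contained in `[0, s^k]^d`. -/
def blockFamily (d s k : ℕ) : Set (Set (Fin d → ℝ)) :=
  {B | ∃ t : Fin d → ℕ, ∃ p : Fin d → ℤ, (∑ i, t i) = k ∧
    (∀ i, 0 ≤ p i ∧ p i < (s : ℤ) ^ (k - t i)) ∧ B = block d s t p}

open Finset

theorem Finset.Nat.card_antidiagonalTuple (d k : ℕ) :
    #(Finset.Nat.antidiagonalTuple d k) = (d + k - 1).choose k := by
  rw [← piAntidiag_univ_fin_eq_antidiagonalTuple, ← map_sym_eq_piAntidiag, card_map, sym_univ,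
    card_univ, Sym.card_sym_eq_choose, Fintype.card_fin]

theorem Finset.sum_card_le_card_biUnion_add_sum_sum_card_inter {ι α : Type*} [DecidableEq ι]
    [DecidableEq α] (s : Finset ι) (A : ι → Finset α) :
    ∑ i ∈ s, #(A i) ≤ #(s.biUnion A) + ∑ i ∈ s, ∑ j ∈ s.erase i, #(A i ∩ A j) := by
  set V := s.biUnion A
  -- With `N x` the multiplicity of `x`, this is `∑ N ≤ #V + ∑ N (N - 1)`, from `2 N ≤ 1 + N²`.
  set N : α → ℕ := fun x => #{i ∈ s | x ∈ A i}
  have hinter : ∀ i ∈ s, ∀ j, #(A i ∩ A j) = #{x ∈ V | x ∈ A i ∧ x ∈ A j} := fun i hi j => by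
    congr 1; ext x
    simp only [mem_inter, mem_filter]
    exact ⟨fun h => ⟨subset_biUnion_of_mem A hi h.1, h⟩, And.right⟩
  have hfirst : ∑ i ∈ s, #(A i) = ∑ x ∈ V, N x := by
    simp_rw [N, card_filter]
    rw [sum_comm]
    refine sum_congr rfl fun i hi => ?_
    rw [← card_filter, filter_mem_eq_inter, inter_eq_right.2 (subset_biUnion_of_mem A hi)]
  have hsecond : ∑ i ∈ s, ∑ j ∈ s, #(A i ∩ A j) = ∑ x ∈ V, N x ^ 2 := by
    rw [sum_congr rfl fun i hi => sum_congr rfl fun j _ => hinter i hi j]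
    simp_rw [N, sq, card_filter, sum_mul_sum, ite_zero_mul_ite_zero, mul_one]
    exact (sum_congr rfl fun i _ => sum_comm).trans sum_comm
  have hdiag : ∀ i ∈ s, ∑ j ∈ s, #(A i ∩ A j) = #(A i) + ∑ j ∈ s.erase i, #(A i ∩ A j) :=
    fun i hi => by rw [← add_sum_erase s _ hi, inter_self]
  have hsq : ∀ n : ℕ, 2 * n ≤ 1 + n ^ 2 := fun n => by nlinarith [sq_nonneg ((n : ℤ) - 1)]
  have key : 2 * ∑ x ∈ V, N x ≤ #V + ∑ x ∈ V, N x ^ 2 := by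
    rw [mul_sum, card_eq_sum_ones, ← sum_add_distrib]
    exact sum_le_sum fun x _ => hsq _
  rw [← hsecond, sum_congr rfl hdiag, sum_add_distrib, ← hfirst] at key
  omega

theorem Finset.sum_min_lt_sum_of_ne {ι M : Type*} [Fintype ι] [AddCommMonoid M] [LinearOrder M]
    [IsOrderedCancelAddMonoid M] {f g : ι → M} (hsum : ∑ i, f i = ∑ i, g i) (hne : f ≠ g) :
    ∑ i, min (f i) (g i) < ∑ i, f i := by
  refine (sum_le_sum fun i _ => min_le_left _ _).lt_of_ne fun h => hne (funext fun i => ?_)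
  have hf := (sum_eq_sum_iff_of_le fun i _ => min_le_left (f i) (g i)).1 h i (mem_univ i)
  have hg := (sum_eq_sum_iff_of_le fun i _ => min_le_right (f i) (g i)).1 (h.trans hsum) i
    (mem_univ i)
  rw [← hf, hg]

theorem Int.card_Ico_mul_mul_add_one (n : ℕ) (q : ℤ) : #(Ico (n * q) (n * (q + 1))) = n := by
  rw [Int.card_Ico, mul_add_one, add_sub_cancel_left, Int.toNat_natCast]

theorem div_sq_le_of_mul_le_add_mul {s n M C D ε : ℝ} (hε : 0 < ε) (hM : 0 < M) (hs : 0 ≤ s)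
    (hC : 1 ≤ C) (hlow : (1 + ε) * M ≤ n) (hup : n ≤ C * M) (hcount : s * n ≤ s * M + n * D) :
    ε * s / C ^ 2 ≤ D := by
  have hgap : ε * M ≤ n - M := by linarith
  have hεM : 0 < ε * M := mul_pos hε hM
  have hn : 0 < n := by linarith
  have hnD : s * (n - M) ≤ n * D := by linarith
  have hD : 0 ≤ D := nonneg_of_mul_nonneg_right ((mul_nonneg hs (by linarith)).trans hnD) hn
  have hεs : ε * s ≤ C * D := by
    refine le_of_mul_le_mul_right ?_ hM
    nlinarith [mul_le_mul_of_nonneg_right hup hD]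
  calc ε * s / C ^ 2 ≤ ε * s / C :=
        div_le_div_of_nonneg_left (by positivity) (by positivity) (by nlinarith)
    _ ≤ D := (div_le_iff₀ (by positivity)).2 (by linarith)

section Blocks

variable {d s k : ℕ}

def blockPoints (d s : ℕ) (t : Fin d → ℕ) (p : Fin d → ℤ) : Finset (Fin d → ℤ) :=
  Fintype.piFinset fun i => Ico ((s : ℤ) ^ t i * p i) ((s : ℤ) ^ t i * (p i + 1))

theorem coe_mem_block_iff {t : Fin d → ℕ} {p x : Fin d → ℤ} :
    (fun i => (x i : ℝ)) ∈ block d s t p ↔ x ∈ blockPoints d s t p := by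
  simp only [block, Set.mem_univ_pi, Set.mem_Ico, blockPoints, Fintype.mem_piFinset, mem_Ico]
  exact forall_congr' fun i => by norm_cast

theorem card_blockPoints (t : Fin d → ℕ) (p : Fin d → ℤ) :
    #(blockPoints d s t p) = s ^ ∑ i, t i := by
  simp only [blockPoints, Fintype.card_piFinset, ← Nat.cast_pow, Int.card_Ico_mul_mul_add_one,
    prod_pow_eq_pow_sum]

theorem card_blockPoints_inter_le (t t' : Fin d → ℕ) (p p' : Fin d → ℤ) :
    #(blockPoints d s t p ∩ blockPoints d s t' p') ≤ s ^ ∑ i, min (t i) (t' i) := by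
  rw [blockPoints, blockPoints, ← Fintype.piFinset_inter, Fintype.card_piFinset,
    ← prod_pow_eq_pow_sum]
  refine prod_le_prod' fun i _ => ?_
  rcases le_total (t i) (t' i) with h | h
  · rw [min_eq_left h, ← Int.card_Ico_mul_mul_add_one (s ^ t i) (p i), Nat.cast_pow]
    exact card_le_card inter_subset_left
  · rw [min_eq_right h, ← Int.card_Ico_mul_mul_add_one (s ^ t' i) (p' i), Nat.cast_pow]
    exact card_le_card inter_subset_right

theorem eq_of_block_inter_nonempty (hs : 0 < s) {t : Fin d → ℕ} {p p' : Fin d → ℤ}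
    (h : (block d s t p ∩ block d s t p').Nonempty) : p = p' := by
  obtain ⟨y, hy, hy'⟩ := h
  funext i
  have h1 := hy i (Set.mem_univ i)
  have h2 := hy' i (Set.mem_univ i)
  simp only [Set.mem_Ico] at h1 h2
  have hpow : (0 : ℝ) < (s : ℝ) ^ t i := by positivity
  have e1 : (p i : ℝ) < p' i + 1 := lt_of_mul_lt_mul_left (h1.1.trans_lt h2.2) hpow.le
  have e2 : (p' i : ℝ) < p i + 1 := lt_of_mul_lt_mul_left (h2.1.trans_lt h1.2) hpow.le
  norm_cast at e1 e2
  omega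

theorem blockPoints_subset_piFinset {t : Fin d → ℕ} {p : Fin d → ℤ} (hsum : ∑ i, t i = k)
    (hp : ∀ i, 0 ≤ p i ∧ p i < (s : ℤ) ^ (k - t i)) :
    blockPoints d s t p ⊆ Fintype.piFinset fun _ => Ico (0 : ℤ) ((s : ℤ) ^ k) := by
  intro x hx
  simp only [blockPoints, Fintype.mem_piFinset, mem_Ico] at hx ⊢
  intro i
  have hti : t i ≤ k := hsum ▸ single_le_sum (fun j _ => Nat.zero_le (t j)) (mem_univ i)
  have hpos : (0 : ℤ) ≤ (s : ℤ) ^ t i := by positivity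
  refine ⟨(mul_nonneg hpos (hp i).1).trans (hx i).1, (hx i).2.trans_le ?_⟩
  calc (s : ℤ) ^ t i * (p i + 1) ≤ (s : ℤ) ^ t i * (s : ℤ) ^ (k - t i) :=
        mul_le_mul_of_nonneg_left (hp i).2 hpos
    _ = (s : ℤ) ^ k := by rw [← pow_add, Nat.add_sub_cancel' hti]

def latticePoints (d s k : ℕ) (B : Set (Fin d → ℝ)) : Finset (Fin d → ℤ) :=
  {x ∈ Fintype.piFinset fun _ => Ico (0 : ℤ) ((s : ℤ) ^ k) | (fun i => (x i : ℝ)) ∈ B}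

theorem latticePoints_block {t : Fin d → ℕ} {p : Fin d → ℤ} (hsum : ∑ i, t i = k)
    (hp : ∀ i, 0 ≤ p i ∧ p i < (s : ℤ) ^ (k - t i)) :
    latticePoints d s k (block d s t p) = blockPoints d s t p := by
  ext x
  rw [latticePoints, mem_filter, coe_mem_block_iff]
  exact ⟨And.right, fun h => ⟨blockPoints_subset_piFinset hsum hp h, h⟩⟩

theorem card_biUnion_latticePoints_le (S : Finset (Set (Fin d → ℝ))) :
    #(S.biUnion (latticePoints d s k)) ≤ s ^ (k * d) := by
  refine (card_le_card (biUnion_subset.2 fun B _ => filter_subset _ _)).trans_eq ?_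
  rw [Fintype.card_piFinset_const, Int.card_Ico, sub_zero, ← Nat.cast_pow, Int.toNat_natCast,
    ← pow_mul]

theorem mul_card_latticePoints_inter_le (hs : 0 < s) {B B' : Set (Fin d → ℝ)}
    (hB : B ∈ blockFamily d s k) (hB' : B' ∈ blockFamily d s k) (hne : B ≠ B') :
    s * #(latticePoints d s k B ∩ latticePoints d s k B') ≤ s ^ k := by
  obtain ⟨t, p, hsum, hp, rfl⟩ := hB
  obtain ⟨t', p', hsum', hp', rfl⟩ := hB'
  rw [latticePoints_block hsum hp, latticePoints_block hsum' hp']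
  by_cases htt : t = t'
  · subst htt
    have hdisj : blockPoints d s t p ∩ blockPoints d s t p' = ∅ := by
      refine eq_empty_of_forall_notMem fun x hx => hne ?_
      rw [mem_inter, ← coe_mem_block_iff, ← coe_mem_block_iff] at hx
      rw [eq_of_block_inter_nonempty hs ⟨_, hx⟩]
    simp [hdisj]
  · calc s * #(blockPoints d s t p ∩ blockPoints d s t' p')
        ≤ s * s ^ ∑ i, min (t i) (t' i) := Nat.mul_le_mul_left _ (card_blockPoints_inter_le _ _ _ _)
      _ = s ^ (∑ i, min (t i) (t' i) + 1) := (pow_succ' _ _).symm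
      _ ≤ s ^ k := Nat.pow_le_pow_right hs (hsum ▸ sum_min_lt_sum_of_ne (hsum.trans hsum'.symm) htt)

def blockFinset (d s k : ℕ) : Finset (Set (Fin d → ℝ)) :=
  ((Nat.antidiagonalTuple d k).sigma fun t =>
    Fintype.piFinset fun i => Ico (0 : ℤ) ((s : ℤ) ^ (k - t i))).image fun tp => block d s tp.1 tp.2

theorem coe_blockFinset : (blockFinset d s k : Set (Set (Fin d → ℝ))) = blockFamily d s k := by
  ext B
  simp only [blockFinset, blockFamily, coe_image, Set.mem_image, mem_coe, mem_sigma,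
    Nat.mem_antidiagonalTuple, Fintype.mem_piFinset, mem_Ico, Sigma.exists, Set.mem_ofPred_eq]
  exact ⟨fun ⟨t, p, ⟨ht, hp⟩, h⟩ => ⟨t, p, ht, hp, h.symm⟩,
    fun ⟨t, p, ht, hp, h⟩ => ⟨t, p, ⟨ht, hp⟩, h.symm⟩⟩

theorem sum_tsub_eq_mul_pred {t : Fin d → ℕ} (hsum : ∑ i, t i = k) :
    ∑ i, (k - t i) = k * (d - 1) := by
  have hle : ∀ i, t i ≤ k := fun i =>
    hsum ▸ single_le_sum (fun j _ => Nat.zero_le (t j)) (mem_univ i)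
  rw [sum_tsub_distrib _ fun i _ => hle i, hsum, sum_const, card_univ, Fintype.card_fin,
    smul_eq_mul, Nat.mul_sub_one, mul_comm]

theorem card_blockFinset_le :
    #(blockFinset d s k) ≤ (d + k - 1).choose k * s ^ (k * (d - 1)) := by
  refine card_image_le.trans_eq ?_
  rw [card_sigma, ← Nat.card_antidiagonalTuple, ← smul_eq_mul, ← sum_const]
  refine sum_congr rfl fun t ht => ?_
  simp only [Fintype.card_piFinset, Int.card_Ico, sub_zero, ← Nat.cast_pow, Int.toNat_natCast,
    prod_pow_eq_pow_sum, sum_tsub_eq_mul_pred (Nat.mem_antidiagonalTuple.1 ht)]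

theorem mul_sum_card_latticePoints_inter_le (hs : 0 < s) {S : Finset (Set (Fin d → ℝ))}
    (hS : ↑S ⊆ blockFamily d s k) {B : Set (Fin d → ℝ)} (hB : B ∈ S) :
    s * ∑ B' ∈ S.erase B, #(latticePoints d s k B ∩ latticePoints d s k B')
      ≤ s ^ k * #{B' ∈ S | B' ≠ B ∧ (B ∩ B').Nonempty} := by
  have hfilter :
      {B' ∈ S | B' ≠ B ∧ (B ∩ B').Nonempty} = {B' ∈ S.erase B | (B ∩ B').Nonempty} := by
    ext B'; simp only [mem_filter, mem_erase]; tauto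
  rw [hfilter, mul_sum, card_eq_sum_ones, mul_sum, sum_filter, mul_one]
  refine sum_le_sum fun B' hB' => ?_
  obtain ⟨hne, hB'S⟩ := mem_erase.1 hB'
  split_ifs with hint
  · exact mul_card_latticePoints_inter_le hs (hS hB) (hS hB'S) hne.symm
  · have hempty : latticePoints d s k B ∩ latticePoints d s k B' = ∅ := by
      ext x
      simp only [latticePoints, mem_inter, mem_filter, notMem_empty, iff_false]
      exact fun h => hint ⟨_, h.1.2, h.2.2⟩
    rw [hempty, card_empty, mul_zero]

theorem mul_card_le_add_sum_card_intersecting (hs : 0 < s) (hd : 1 ≤ d)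
    {S : Finset (Set (Fin d → ℝ))} (hS : ↑S ⊆ blockFamily d s k) :
    s * #S ≤ s * s ^ (k * (d - 1)) + ∑ B ∈ S, #{B' ∈ S | B' ≠ B ∧ (B ∩ B').Nonempty} := by
  have hcount := sum_card_le_card_biUnion_add_sum_sum_card_inter S (latticePoints d s k)
  have hcard : ∀ B ∈ S, #(latticePoints d s k B) = s ^ k := fun B hB => by
    obtain ⟨t, p, hsum, hp, rfl⟩ := hS hB
    rw [latticePoints_block hsum hp, card_blockPoints, hsum]
  rw [sum_congr rfl hcard, sum_const, smul_eq_mul] at hcount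
  have hpow : s ^ (k * d) = s ^ (k * (d - 1)) * s ^ k := by
    rw [← pow_add, ← Nat.mul_add_one, Nat.sub_add_cancel hd]
  refine Nat.le_of_mul_le_mul_right ?_ (pow_pos hs k)
  calc s * #S * s ^ k ≤ s * (#(S.biUnion (latticePoints d s k)) +
        ∑ B ∈ S, ∑ B' ∈ S.erase B, #(latticePoints d s k B ∩ latticePoints d s k B')) := by
        rw [mul_assoc]; exact Nat.mul_le_mul_left _ hcount
    _ ≤ s * s ^ (k * d) + s ^ k * ∑ B ∈ S, #{B' ∈ S | B' ≠ B ∧ (B ∩ B').Nonempty} := by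
        rw [mul_add, mul_sum, mul_sum]
        exact add_le_add (Nat.mul_le_mul_left _ (card_biUnion_latticePoints_le S))
          (sum_le_sum fun B hB => mul_sum_card_latticePoints_inter_le hs hS hB)
    _ = _ := by rw [hpow]; ring

end Blocks

theorem supersaturation_general (d s k : ℕ) (hd : 2 ≤ d) (hs : 2 ≤ s)
    (ε : ℝ) (hε : 0 < ε) (S : Finset (Set (Fin d → ℝ)))
    (hS : ↑S ⊆ blockFamily d s k)
    (hcard : (1 + ε) * (s : ℝ) ^ (k * (d - 1)) ≤ (S.card : ℝ)) :
    ∃ B ∈ S, ε * s / ((k + d - 1).choose (d - 1) : ℝ) ^ 2 ≤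
      ((S.filter fun B' => B' ≠ B ∧ (B ∩ B').Nonempty).card : ℝ) := by
  have hupper : #S ≤ (k + d - 1).choose (d - 1) * s ^ (k * (d - 1)) := by
    rw [Nat.choose_symm_of_eq_add (show k + d - 1 = d - 1 + k by omega), add_comm k d]
    exact (card_le_card (coe_subset.1 (coe_blockFinset ▸ hS))).trans card_blockFinset_le
  have hnonempty : S.Nonempty := card_pos.1 <| by
    have : (0 : ℝ) < #S := lt_of_lt_of_le (by positivity) hcard
    exact_mod_cast this
  obtain ⟨B, hB, hmax⟩ :=
    S.exists_max_image (fun B => #{B' ∈ S | B' ≠ B ∧ (B ∩ B').Nonempty}) hnonempty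
  have hcount : s * #S ≤ s * s ^ (k * (d - 1)) + #S * #{B' ∈ S | B' ≠ B ∧ (B ∩ B').Nonempty} :=
    (mul_card_le_add_sum_card_intersecting (by omega) (by omega) hS).trans
      (Nat.add_le_add_left (sum_le_card_nsmul _ _ _ hmax) _)
  refine ⟨B, hB, div_sq_le_of_mul_le_add_mul hε (by positivity) (by positivity) ?_ hcard
    (by exact_mod_cast hupper) (by exact_mod_cast hcount)⟩
  exact_mod_cast Nat.choose_pos (by omega)

/-- Supersaturation: if `S ⊆ 𝓑` has at least `(1+ε)·M` elements, where `M = s^{k(d-1)}`,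
then the subgraph of the intersection graph induced on `S` has a vertex of degree at
least `ε·s/|T|²`, where `|T| = C(k+d-1, d-1)`. -/
theorem supersaturation (d s k : ℕ) (hd : 2 ≤ d) (hs : 2 ≤ s) (hk : 1 ≤ k)
    (ε : ℝ) (hε : 0 < ε) (S : Finset (Set (Fin d → ℝ)))
    (hS : ↑S ⊆ blockFamily d s k)
    (hcard : (1 + ε) * (s : ℝ) ^ (k * (d - 1)) ≤ (S.card : ℝ)) :
    ∃ B ∈ S, ε * s / ((k + d - 1).choose (d - 1) : ℝ) ^ 2 ≤
      ((S.filter fun B' => B' ≠ B ∧ (B ∩ B').Nonempty).card : ℝ) :=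
  supersaturation_general d s k hd hs ε hε S hS hcard
end
end

section
/- Let X be a random subset of 𝓑 obtained by including each block independently with probability p ∈ (0,1), and let H be the subgraph of G induced on X. If s ≥ |T|³, p > 2·(log s)·|T|³/s and p·M ≥ 3, then α(H) ≤ 6·p·M holds with probability at least 3/4. -/
/-!
Union bound over the pairwise disjoint subfamilies of size `n = ⌊6pM⌋ + 1`: it suffices to show
that their number times `p ^ n` is at most `1/4`. To count them, record for each member of such a
family `J` of type `t` and each other type `t'` the cell of the common coarsening `t ⊔ t'` that
contains it. Blocks of types `t ≠ t'` lying in the same cell of `t ⊔ t'` intersect, so in a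
disjoint family the cells recorded for `(t, t')` and for `(t', t)` are different. Hence all blocks
compatible with the record of `J` are pairwise disjoint, and by volume there are at most `M` of
them: each record accounts for at most `C(M, n)` families. There are at most `2 ^ L` records,
where `L ≤ |T|² M / s` is the number of possible labels (type pair, cell), and
`C(M, n) p ^ n ≤ (e p M / n) ^ n ≤ 2 ^ (-n)`; the lower bound on `p` gives `n ≥ L + 2`.
-/

open scoped Classical

noncomputable section

/-- The probability that a `p`-random subset of the finite family `𝓑` satisfies the
event `E`: each member is included independently with probability `p`. -/
def randomSubsetProb {α : Type*} (𝓑 : Finset α) (p : ℝ) (E : Finset α → Prop) : ℝ :=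
  ∑ X ∈ 𝓑.powerset, if E X then p ^ X.card * (1 - p) ^ (𝓑.card - X.card) else 0

open Finset MeasureTheory Function
open scoped ENNReal

section RandomSubset

variable {α : Type*} (F : Finset α) {p : ℝ}

lemma randomSubsetProb_add_randomSubsetProb_not (E : Finset α → Prop) :
    randomSubsetProb F p E + randomSubsetProb F p (fun X => ¬ E X) = 1 := by
  rw [randomSubsetProb, randomSubsetProb, ← sum_add_distrib]
  calc _ = ∑ X ∈ F.powerset, p ^ #X * (1 - p) ^ (#F - #X) :=
        sum_congr rfl fun X _ => by by_cases h : E X <;> simp [h]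
    _ = 1 := by rw [sum_pow_mul_eq_add_pow, add_sub_cancel, one_pow]

lemma randomSubsetProb_superset {I : Finset α} (hI : I ⊆ F) :
    randomSubsetProb F p (fun X => I ⊆ X) = p ^ #I := by
  -- Expanding `∏ a ∈ F, (p + g a)` with `g a = if a ∈ I then 0 else 1 - p` over the subsets
  -- `X ⊆ F` yields the weight of `X` when `I ⊆ X` and `0` otherwise.
  have hterm : ∀ X ∈ F.powerset, (∏ _a ∈ X, p) * ∏ a ∈ F \ X, (if a ∈ I then 0 else 1 - p) =
      if I ⊆ X then p ^ #X * (1 - p) ^ (#F - #X) else 0 := by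
    intro X hX
    split_ifs with hIX
    · rw [prod_const, prod_congr rfl fun a ha => if_neg fun haI => (mem_sdiff.1 ha).2 (hIX haI),
        prod_const, card_sdiff_of_subset (mem_powerset.1 hX)]
    · obtain ⟨a, haI, haX⟩ := not_subset.1 hIX
      rw [prod_eq_zero (mem_sdiff.2 ⟨hI haI, haX⟩) (by simp [haI]), mul_zero]
  calc randomSubsetProb F p (fun X => I ⊆ X)
      = ∏ a ∈ F, (p + if a ∈ I then 0 else 1 - p) := by
        rw [prod_add, randomSubsetProb]
        exact sum_congr rfl fun X hX => by rw [hterm X hX]; congr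
    _ = p ^ #I := by
        simp_rw [apply_ite (p + ·), add_zero, add_sub_cancel, prod_ite_mem, prod_const,
          inter_eq_right.2 hI]

lemma randomSubsetProb_mono (hp0 : 0 ≤ p) (hp1 : p ≤ 1) {E E' : Finset α → Prop}
    (h : ∀ X ⊆ F, E X → E' X) :
    randomSubsetProb F p E ≤ randomSubsetProb F p E' := by
  have := sub_nonneg.2 hp1
  refine sum_le_sum fun X hX => ?_
  by_cases hE : E X
  · simp [hE, h X (mem_powerset.1 hX) hE]
  · simp only [hE, if_false]; split_ifs <;> positivity

lemma randomSubsetProb_exists_le (hp0 : 0 ≤ p) (hp1 : p ≤ 1) {ι : Type*} (s : Finset ι)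
    (E : ι → Finset α → Prop) :
    randomSubsetProb F p (fun X => ∃ i ∈ s, E i X) ≤ ∑ i ∈ s, randomSubsetProb F p (E i) := by
  have := sub_nonneg.2 hp1
  simp only [randomSubsetProb]
  rw [sum_comm]
  refine sum_le_sum fun X _ => ?_
  split_ifs with h
  · obtain ⟨i, hi, hE⟩ := h
    exact single_le_sum (f := fun i => if E i X then _ else 0)
      (fun j _ => by split_ifs <;> positivity) hi |>.trans_eq' (by simp [hE])
  · exact sum_nonneg fun i _ => by split_ifs <;> positivity

lemma one_sub_card_mul_pow_le_randomSubsetProb (hp0 : 0 ≤ p) (hp1 : p ≤ 1) (r : α → α → Prop)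
    {c : ℝ} (hc : 0 ≤ c) :
    1 - #((F.powersetCard (⌊c⌋₊ + 1)).filter fun I : Finset α => (I : Set α).Pairwise r) *
        p ^ (⌊c⌋₊ + 1) ≤
      randomSubsetProb F p (fun X => ∀ I ⊆ X, (I : Set α).Pairwise r → (#I : ℝ) ≤ c) := by
  set n := ⌊c⌋₊ + 1
  set bad := (F.powersetCard n).filter fun I : Finset α => (I : Set α).Pairwise r
  have hwitness : ∀ X ⊆ F, ¬ (∀ I ⊆ X, (I : Set α).Pairwise r → (#I : ℝ) ≤ c) →
      ∃ I ∈ bad, I ⊆ X := by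
    intro X hX hE
    simp only [not_forall, not_le, exists_prop] at hE
    obtain ⟨I, hIX, hr, hcI⟩ := hE
    obtain ⟨J, hJI, hJ⟩ := exists_subset_card_eq (s := I) (n := n) ((Nat.floor_lt hc).2 hcI)
    exact ⟨J, mem_filter.2 ⟨mem_powersetCard.2 ⟨hJI.trans (hIX.trans hX), hJ⟩,
      hr.mono (coe_subset.2 hJI)⟩, hJI.trans hIX⟩
  have hsum : ∑ I ∈ bad, randomSubsetProb F p (fun X => I ⊆ X) = #bad * p ^ n := by
    rw [← nsmul_eq_mul, ← sum_const]
    refine sum_congr rfl fun I hI => ?_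
    obtain ⟨hIF, hIn⟩ := mem_powersetCard.1 (mem_filter.1 hI).1
    rw [randomSubsetProb_superset F hIF, hIn]
  have hbad := (randomSubsetProb_mono F hp0 hp1 hwitness).trans
    (randomSubsetProb_exists_le F hp0 hp1 bad fun I X => I ⊆ X)
  linarith [randomSubsetProb_add_randomSubsetProb_not F (p := p)
    (fun X => ∀ I ⊆ X, (I : Set α).Pairwise r → (#I : ℝ) ≤ c)]

end RandomSubset

lemma Finset.card_filter_pairwise_powersetCard_image_le {ι α : Type*} [DecidableEq ι]
    [DecidableEq α] (P : Finset ι) (f : ι → α) (r : α → α → Prop) (n : ℕ) :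
    #(((P.image f).powersetCard n).filter fun I : Finset α => (I : Set α).Pairwise r) ≤
      #((P.powersetCard n).filter fun J : Finset ι => (J : Set ι).Pairwise (r on f)) := by
  refine card_le_card_of_surjOn (image f) fun I hI => ?_
  obtain ⟨hIP, hIn⟩ := mem_powersetCard.1 (mem_filter.1 hI).1
  obtain ⟨J, hJP, hinj, rfl⟩ := exists_subset_injOn_image_eq_of_surjOn (P : Set ι) I
    fun a ha => by simpa using hIP ha
  refine ⟨J, mem_filter.2 ⟨mem_powersetCard.2 ⟨coe_subset.1 hJP,
    (card_image_of_injOn hinj).symm.trans hIn⟩, fun x hx y hy hxy => ?_⟩, rfl⟩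
  exact (mem_filter.1 hI).2 (mem_image_of_mem f hx) (mem_image_of_mem f hy) (hinj.ne hx hy hxy)

section Blocks

variable {d s : ℕ}

def adicIco (s a : ℕ) (q : ℤ) : Set ℝ := Set.Ico ((s : ℝ) ^ a * q) ((s : ℝ) ^ a * (q + 1))

lemma block_eq_pi (t : Fin d → ℕ) (q : Fin d → ℤ) :
    block d s t q = Set.univ.pi fun i => adicIco s (t i) (q i) := rfl

lemma mem_adicIco (hs : 0 < s) {a : ℕ} {q : ℤ} {y : ℝ} :
    y ∈ adicIco s a q ↔ ⌊y / (s : ℝ) ^ a⌋ = q := by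
  have : (0 : ℝ) < (s : ℝ) ^ a := by positivity
  rw [Int.floor_eq_iff, adicIco, Set.mem_Ico, le_div_iff₀ this, div_lt_iff₀ this,
    mul_comm, mul_comm ((q : ℝ) + 1)]

lemma adicIco_subset (hs : 0 < s) {a b : ℕ} (hab : a ≤ b) (q : ℤ) :
    adicIco s a q ⊆ adicIco s b (q / (s : ℤ) ^ (b - a)) := by
  intro y hy
  rw [mem_adicIco hs] at hy ⊢
  have : y / (s : ℝ) ^ b = y / (s : ℝ) ^ a / ((s ^ (b - a) : ℕ) : ℝ) := by
    rw [div_div, Nat.cast_pow, ← pow_add, Nat.add_sub_cancel' hab]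
  rw [this, Int.floor_div_natCast, hy]
  push_cast
  rfl

lemma disjoint_adicIco (hs : 0 < s) {a : ℕ} {q q' : ℤ} (h : q ≠ q') :
    Disjoint (adicIco s a q) (adicIco s a q') :=
  Set.disjoint_left.2 fun _ hy hy' =>
    h (((mem_adicIco hs).1 hy).symm.trans ((mem_adicIco hs).1 hy'))

lemma adicIco_nonempty (hs : 0 < s) (a : ℕ) (q : ℤ) : (adicIco s a q).Nonempty :=
  Set.nonempty_Ico.2 (mul_lt_mul_of_pos_left (lt_add_one _) (by positivity))

lemma adicIco_inter_nonempty (hs : 0 < s) {a b : ℕ} {q q' : ℤ}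
    (h : q / (s : ℤ) ^ (a ⊔ b - a) = q' / (s : ℤ) ^ (a ⊔ b - b)) :
    (adicIco s a q ∩ adicIco s b q').Nonempty := by
  rcases le_total a b with hab | hba
  · rw [sup_of_le_right hab, Nat.sub_self, pow_zero, Int.ediv_one] at h
    rw [Set.inter_eq_left.2 (h ▸ adicIco_subset hs hab q)]
    exact adicIco_nonempty hs a q
  · rw [sup_of_le_left hba, Nat.sub_self, pow_zero, Int.ediv_one] at h
    rw [Set.inter_eq_right.2 (h ▸ adicIco_subset hs hba q')]
    exact adicIco_nonempty hs b q'

def coarsen (s : ℕ) (u t : Fin d → ℕ) (q : Fin d → ℤ) : Fin d → ℤ :=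
  fun i => q i / (s : ℤ) ^ (u i - t i)

lemma block_subset_block_coarsen (hs : 0 < s) {t u : Fin d → ℕ} (htu : t ≤ u) (q : Fin d → ℤ) :
    block d s t q ⊆ block d s u (coarsen s u t q) :=
  Set.pi_mono fun i _ => adicIco_subset hs (htu i) (q i)

lemma disjoint_block (hs : 0 < s) {t : Fin d → ℕ} {q q' : Fin d → ℤ} (h : q ≠ q') :
    Disjoint (block d s t q) (block d s t q') := by
  obtain ⟨i, hi⟩ := Function.ne_iff.1 h
  exact Set.disjoint_univ_pi.2 ⟨i, disjoint_adicIco hs hi⟩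

lemma disjoint_block_of_coarsen_ne (hs : 0 < s) {t t' u : Fin d → ℕ} {q q' : Fin d → ℤ}
    (ht : t ≤ u) (ht' : t' ≤ u) (h : coarsen s u t q ≠ coarsen s u t' q') :
    Disjoint (block d s t q) (block d s t' q') :=
  (disjoint_block hs h).mono (block_subset_block_coarsen hs ht q)
    (block_subset_block_coarsen hs ht' q')

lemma not_disjoint_block_of_coarsen_eq (hs : 0 < s) {t t' : Fin d → ℕ} {q q' : Fin d → ℤ}
    (h : coarsen s (t ⊔ t') t q = coarsen s (t ⊔ t') t' q') :
    ¬ Disjoint (block d s t q) (block d s t' q') := by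
  rw [Set.not_disjoint_iff_nonempty_inter, block_eq_pi, block_eq_pi, ← Set.pi_inter_distrib,
    Set.univ_pi_nonempty_iff]
  exact fun i => adicIco_inter_nonempty hs (congrFun h i)

lemma measurableSet_block (t : Fin d → ℕ) (q : Fin d → ℤ) : MeasurableSet (block d s t q) :=
  MeasurableSet.univ_pi fun _ => measurableSet_Ico

lemma volume_block (t : Fin d → ℕ) (q : Fin d → ℤ) :
    volume (block d s t q) = (s : ℝ≥0∞) ^ ∑ i, t i := by
  rw [block, Real.volume_pi_Ico, ← prod_pow_eq_pow_sum]
  refine prod_congr rfl fun i _ => ?_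
  rw [← mul_sub, add_sub_cancel_left, mul_one, ENNReal.ofReal_pow (Nat.cast_nonneg _),
    ENNReal.ofReal_natCast]

end Blocks

lemma Finset.card_mul_le_measure_of_pairwiseDisjoint {X ι : Type*} [MeasurableSpace X]
    (μ : Measure X) {J : Finset ι} {f : ι → Set X} {S : Set X} {v : ℝ≥0∞}
    (hJ : (J : Set ι).PairwiseDisjoint f) (hmeas : ∀ i ∈ J, MeasurableSet (f i))
    (hsub : ∀ i ∈ J, f i ⊆ S) (hv : ∀ i ∈ J, v ≤ μ (f i)) : #J * v ≤ μ S :=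
  calc #J * v = ∑ _i ∈ J, v := by rw [sum_const, nsmul_eq_mul]
    _ ≤ ∑ i ∈ J, μ (f i) := sum_le_sum hv
    _ = μ (⋃ i ∈ J, f i) := (measure_biUnion_finset hJ hmeas).symm
    _ ≤ μ S := measure_mono (Set.iUnion₂_subset hsub)

abbrev BlockIndex (d : ℕ) := (Fin d → ℕ) × (Fin d → ℤ)

section Params

variable {d : ℕ} (s k : ℕ)

def blockTypes (d k : ℕ) : Finset (Fin d → ℕ) := univ.piAntidiag k

def gridPositions (u : Fin d → ℕ) : Finset (Fin d → ℤ) :=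
  Fintype.piFinset fun i => Ico 0 ((s : ℤ) ^ (k - u i))

def blockParams (d s k : ℕ) : Finset (BlockIndex d) :=
  (blockTypes d k).biUnion fun t => (gridPositions s k t).image (Prod.mk t)

variable {s k}

lemma mem_blockTypes {t : Fin d → ℕ} : t ∈ blockTypes d k ↔ ∑ i, t i = k := by
  simp [blockTypes]

lemma le_of_mem_blockTypes {t : Fin d → ℕ} (ht : t ∈ blockTypes d k) (i : Fin d) : t i ≤ k :=
  (single_le_sum (fun j _ => Nat.zero_le (t j)) (mem_univ i)).trans_eq (mem_blockTypes.1 ht)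

lemma card_blockTypes (hd : 0 < d) : #(blockTypes d k) = (k + d - 1).choose (d - 1) := by
  rw [blockTypes, ← map_sym_eq_piAntidiag, card_map, sym_univ, card_univ,
    Sym.card_sym_eq_choose, Fintype.card_fin, show d + k - 1 = k + d - 1 by omega]
  exact Nat.choose_symm_of_eq_add (by omega)

lemma mem_gridPositions {u : Fin d → ℕ} {q : Fin d → ℤ} :
    q ∈ gridPositions s k u ↔ ∀ i, 0 ≤ q i ∧ q i < (s : ℤ) ^ (k - u i) := by
  simp [gridPositions]

lemma mem_blockParams {x : BlockIndex d} :
    x ∈ blockParams d s k ↔ x.1 ∈ blockTypes d k ∧ x.2 ∈ gridPositions s k x.1 := by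
  constructor
  · simp only [blockParams, mem_biUnion, mem_image]
    rintro ⟨t, ht, q, hq, rfl⟩
    exact ⟨ht, hq⟩
  · intro ⟨ht, hq⟩
    exact mem_biUnion.2 ⟨x.1, ht, mem_image.2 ⟨x.2, hq, rfl⟩⟩

lemma card_gridPositions (u : Fin d → ℕ) : #(gridPositions s k u) = s ^ ∑ i, (k - u i) := by
  simp only [gridPositions, Fintype.card_piFinset, Int.card_Ico, sub_zero, ← Nat.cast_pow,
    Int.toNat_natCast, prod_pow_eq_pow_sum]

lemma coe_eq_image_blockParams {𝓑 : Finset (Set (Fin d → ℝ))} (h𝓑 : ↑𝓑 = blockFamily d s k) :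
    𝓑 = (blockParams d s k).image (uncurry (block d s)) := by
  refine coe_injective (h𝓑.trans ?_)
  ext B
  simp only [blockFamily, coe_image, Set.mem_image, mem_coe, mem_blockParams, mem_blockTypes,
    mem_gridPositions, Prod.exists, uncurry_apply_pair, Set.mem_ofPred_eq]
  aesop

lemma coarsen_mem_gridPositions (hs : 0 < s) {x : BlockIndex d}
    (hx : x ∈ blockParams d s k) {u : Fin d → ℕ} (hxu : x.1 ≤ u) (hu : ∀ i, u i ≤ k) :
    coarsen s u x.1 x.2 ∈ gridPositions s k u := by
  obtain ⟨-, hq⟩ := mem_blockParams.1 hx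
  rw [mem_gridPositions] at hq ⊢
  intro i
  have hpos : 0 < (s : ℤ) ^ (u i - x.1 i) := by positivity
  refine ⟨Int.ediv_nonneg (hq i).1 hpos.le, Int.ediv_lt_of_lt_mul hpos ?_⟩
  rw [← pow_add, Nat.sub_add_sub_cancel (hu i) (hxu i)]
  exact (hq i).2

lemma block_subset_cube (hs : 0 < s) {x : BlockIndex d} (hx : x ∈ blockParams d s k) :
    uncurry (block d s) x ⊆ block d s (fun _ => k) 0 := by
  have hk : x.1 ≤ fun _ => k := le_of_mem_blockTypes (mem_blockParams.1 hx).1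
  have hq := mem_gridPositions.1 (mem_blockParams.1 hx).2
  have hzero : coarsen s (fun _ => k) x.1 x.2 = 0 :=
    funext fun i => Int.ediv_eq_zero_of_lt (hq i).1 (hq i).2
  simpa [hzero, uncurry] using block_subset_block_coarsen hs hk x.2

lemma card_le_of_pairwiseDisjoint_block (hs : 0 < s) {J : Finset (BlockIndex d)}
    (hJ : J ⊆ blockParams d s k) (hdisj : (J : Set _).PairwiseDisjoint (uncurry (block d s))) :
    #J ≤ s ^ (k * (d - 1)) := by
  have hvol := Finset.card_mul_le_measure_of_pairwiseDisjoint volume hdisj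
    (fun x _ => measurableSet_block x.1 x.2) (fun x hx => block_subset_cube hs (hJ hx))
    (v := (s : ℝ≥0∞) ^ k) fun x hx => by
      rw [uncurry, volume_block, mem_blockTypes.1 (mem_blockParams.1 (hJ hx)).1]
  rw [volume_block, sum_const, card_univ, Fintype.card_fin, smul_eq_mul] at hvol
  have hcard : #J * s ^ k ≤ s ^ (k * (d - 1)) * s ^ k := by
    rw [← pow_add]
    exact (by exact_mod_cast hvol : #J * s ^ k ≤ s ^ (d * k)).trans
      (Nat.pow_le_pow_right hs (by cases d <;> simp [Nat.mul_succ, mul_comm]))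
  exact Nat.le_of_mul_le_mul_right hcard (by positivity)

end Params

abbrev CellLabel (d : ℕ) := (Fin d → ℕ) × (Fin d → ℕ) × (Fin d → ℤ)

section Profiles

variable {d : ℕ} (s k : ℕ)

def cellLabel (x : BlockIndex d) (t' : Fin d → ℕ) : CellLabel d :=
  (x.1, t', coarsen s (x.1 ⊔ t') x.1 x.2)

def cellLabels (x : BlockIndex d) : Finset (CellLabel d) :=
  ((blockTypes d k).erase x.1).image (cellLabel s x)

def profile (J : Finset (BlockIndex d)) : Finset (CellLabel d) :=
  J.biUnion (cellLabels s k)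

def candidates (S : Finset (CellLabel d)) : Finset (BlockIndex d) :=
  (blockParams d s k).filter fun x => cellLabels s k x ⊆ S

def allCellLabels (d s k : ℕ) : Finset (CellLabel d) :=
  ((blockTypes d k ×ˢ blockTypes d k).filter fun z => z.1 ≠ z.2).biUnion fun z =>
    (gridPositions s k (z.1 ⊔ z.2)).image fun c => (z.1, z.2, c)

variable {s k}

lemma subset_candidates_profile {J : Finset (BlockIndex d)}
    (hJ : J ⊆ blockParams d s k) : J ⊆ candidates s k (profile s k J) :=
  fun _ hx => mem_filter.2 ⟨hJ hx, subset_biUnion_of_mem (cellLabels s k) hx⟩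

lemma exists_mem_of_mem_candidates_profile {J : Finset (BlockIndex d)} {x : BlockIndex d}
    (hx : x ∈ candidates s k (profile s k J)) {t' : Fin d → ℕ} (ht' : t' ∈ blockTypes d k)
    (hne : t' ≠ x.1) :
    ∃ y ∈ J, y.1 = x.1 ∧ coarsen s (x.1 ⊔ t') x.1 y.2 = coarsen s (x.1 ⊔ t') x.1 x.2 := by
  have h := (mem_filter.1 hx).2 (mem_image_of_mem (cellLabel s x) (mem_erase.2 ⟨hne, ht'⟩))
  simp only [profile, cellLabels, cellLabel, mem_biUnion, mem_image, Prod.mk.injEq] at h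
  obtain ⟨y, hy, t'', -, hty, rfl, hc⟩ := h
  exact ⟨y, hy, hty, hty ▸ hc⟩

lemma pairwiseDisjoint_candidates_profile (hs : 0 < s) {J : Finset (BlockIndex d)}
    (hJ : (J : Set _).PairwiseDisjoint (uncurry (block d s))) :
    (candidates s k (profile s k J) : Set _).PairwiseDisjoint (uncurry (block d s)) := by
  rintro ⟨t, q⟩ hx ⟨t', q'⟩ hy hne
  by_cases htt : t = t'
  · subst htt
    exact disjoint_block hs fun hq => hne (Prod.ext rfl hq)
  have htype : ∀ {x : BlockIndex d}, x ∈ candidates s k (profile s k J) → x.1 ∈ blockTypes d k :=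
    fun hx => (mem_blockParams.1 (mem_filter.1 hx).1).1
  obtain ⟨x', hx'J, hx't, hx'c⟩ := exists_mem_of_mem_candidates_profile hx (htype hy) (Ne.symm htt)
  obtain ⟨y', hy'J, hy't, hy'c⟩ := exists_mem_of_mem_candidates_profile hy (htype hx) htt
  dsimp only at hx't hx'c hy't hy'c
  rw [sup_comm] at hy'c
  -- `x'` and `y'` are disjoint members of `J`, so their cells in `t ⊔ t'`, which are the cells
  -- of `(t, q)` and `(t', q')`, differ.
  have hx'y' : Disjoint (block d s t x'.2) (block d s t' y'.2) := by
    have := hJ hx'J hy'J fun h => htt (hx't.symm.trans ((congrArg Prod.fst h).trans hy't))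
    dsimp only [onFun, uncurry_def] at this
    rwa [hx't, hy't] at this
  refine disjoint_block_of_coarsen_ne hs le_sup_left le_sup_right fun h => ?_
  exact not_disjoint_block_of_coarsen_eq hs (hx'c.trans (h.trans hy'c.symm)) hx'y'

end Profiles

section Counting

variable {d s k : ℕ}

lemma cellLabels_subset_allCellLabels (hs : 0 < s) {x : BlockIndex d}
    (hx : x ∈ blockParams d s k) : cellLabels s k x ⊆ allCellLabels d s k := by
  intro l hl
  obtain ⟨t', ⟨hne, ht'⟩, rfl⟩ := by simpa only [cellLabels, mem_image, mem_erase] using hl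
  have ht := (mem_blockParams.1 hx).1
  refine mem_biUnion.2 ⟨(x.1, t'), mem_filter.2 ⟨mem_product.2 ⟨ht, ht'⟩, Ne.symm hne⟩,
    mem_image.2 ⟨_, coarsen_mem_gridPositions hs hx le_sup_left fun i => ?_, rfl⟩⟩
  exact sup_le (le_of_mem_blockTypes ht i) (le_of_mem_blockTypes ht' i)

lemma profile_subset_allCellLabels (hs : 0 < s) {J : Finset (BlockIndex d)}
    (hJ : J ⊆ blockParams d s k) : profile s k J ⊆ allCellLabels d s k :=
  biUnion_subset.2 fun _ hx => cellLabels_subset_allCellLabels hs (hJ hx)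

lemma lt_sum_sup_of_ne {t t' : Fin d → ℕ} (ht : t ∈ blockTypes d k) (ht' : t' ∈ blockTypes d k)
    (hne : t ≠ t') : k < ∑ i, (t ⊔ t') i := by
  by_contra! h
  have heq : ∀ {v : Fin d → ℕ}, v ∈ blockTypes d k → v ≤ t ⊔ t' → v = t ⊔ t' := fun hv hle =>
    funext fun i => (sum_eq_sum_iff_of_le fun i _ => hle i).1
      (le_antisymm (sum_le_sum fun i _ => hle i) (h.trans (mem_blockTypes.1 hv).ge)) i (mem_univ i)
  exact hne ((heq ht le_sup_left).trans (heq ht' le_sup_right).symm)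

lemma card_gridPositions_sup_mul_le (hs : 0 < s) {t t' : Fin d → ℕ} (ht : t ∈ blockTypes d k)
    (ht' : t' ∈ blockTypes d k) (hne : t ≠ t') :
    #(gridPositions s k (t ⊔ t')) * s ≤ s ^ (k * (d - 1)) := by
  rw [card_gridPositions, ← pow_succ]
  refine Nat.pow_le_pow_right hs ?_
  have hle : ∀ i, (t ⊔ t') i ≤ k := fun i =>
    sup_le (le_of_mem_blockTypes ht i) (le_of_mem_blockTypes ht' i)
  have hsum : ∑ i, (k - (t ⊔ t') i) + ∑ i, (t ⊔ t') i = k * d := by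
    rw [← sum_add_distrib, sum_congr rfl fun i _ => Nat.sub_add_cancel (hle i)]
    simp [mul_comm]
  have := lt_sum_sup_of_ne ht ht' hne
  rw [Nat.mul_sub_one]
  omega

lemma card_allCellLabels_mul_le (hs : 0 < s) :
    #(allCellLabels d s k) * s ≤ #(blockTypes d k) ^ 2 * s ^ (k * (d - 1)) := by
  set pairs := (blockTypes d k ×ˢ blockTypes d k).filter
    fun z : (Fin d → ℕ) × (Fin d → ℕ) => z.1 ≠ z.2
  calc #(allCellLabels d s k) * s ≤ (∑ z ∈ pairs, #(gridPositions s k (z.1 ⊔ z.2))) * s := by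
        gcongr
        exact card_biUnion_le.trans (sum_le_sum fun z _ => card_image_le)
    _ ≤ ∑ _z ∈ pairs, s ^ (k * (d - 1)) := by
        rw [sum_mul]
        refine sum_le_sum fun z hz => ?_
        obtain ⟨hz, hne⟩ := mem_filter.1 hz
        exact card_gridPositions_sup_mul_le hs (mem_product.1 hz).1 (mem_product.1 hz).2 hne
    _ ≤ #(blockTypes d k) ^ 2 * s ^ (k * (d - 1)) := by
        rw [sum_const, smul_eq_mul, sq, ← card_product]
        exact Nat.mul_le_mul_right _ (card_filter_le _ _)

lemma card_pairwiseDisjoint_blockParams_le (hs : 0 < s) (n : ℕ) :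
    #(((blockParams d s k).powersetCard n).filter fun J : Finset (BlockIndex d) =>
        (J : Set _).Pairwise (Disjoint on uncurry (block d s))) ≤
      (s ^ (k * (d - 1))).choose n * 2 ^ #(allCellLabels d s k) := by
  set families := ((blockParams d s k).powersetCard n).filter fun J : Finset (BlockIndex d) =>
    (J : Set _).Pairwise (Disjoint on uncurry (block d s))
  have hfiber : ∀ S, #(families.filter fun J => profile s k J = S) ≤
      (s ^ (k * (d - 1))).choose n := by
    intro S
    rcases (families.filter fun J => profile s k J = S).eq_empty_or_nonempty with h | ⟨J₀, hJ₀⟩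
    · rw [h, card_empty]
      exact Nat.zero_le _
    obtain ⟨hJ₀fam, rfl⟩ := mem_filter.1 hJ₀
    have hcand := card_le_of_pairwiseDisjoint_block hs (filter_subset _ _)
      (pairwiseDisjoint_candidates_profile (k := k) hs (mem_filter.1 hJ₀fam).2)
    refine (card_le_card fun J hJ => ?_).trans ((card_powersetCard _ _).trans_le
      (Nat.choose_le_choose n hcand))
    obtain ⟨hJ, hprofile⟩ := mem_filter.1 hJ
    obtain ⟨hJP, hJn⟩ := mem_powersetCard.1 (mem_filter.1 hJ).1
    exact mem_powersetCard.2 ⟨hprofile ▸ subset_candidates_profile hJP, hJn⟩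
  rw [← card_powerset]
  exact card_le_mul_card_image_of_maps_to (fun J hJ => mem_powerset.2
    (profile_subset_allCellLabels hs (mem_powersetCard.1 (mem_filter.1 hJ).1).1)) _
    fun S _ => hfiber S

end Counting

lemma choose_mul_pow_le_half_pow {M n : ℕ} {p : ℝ} (hp : 0 ≤ p) (h : 6 * p * M ≤ n) :
    (M.choose n : ℝ) * p ^ n ≤ (1 / 2) ^ n :=
  calc (M.choose n : ℝ) * p ^ n ≤ (M : ℝ) ^ n / n.factorial * p ^ n := by
        gcongr; exact Nat.choose_le_pow_div n M
    _ = (p * M) ^ n / n.factorial := by ring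
    _ ≤ ((n : ℝ) / 6) ^ n / n.factorial := by gcongr; linarith
    _ = ((n : ℝ) ^ n / n.factorial) / 6 ^ n := by rw [div_pow]; ring
    _ ≤ Real.exp n / 6 ^ n := by gcongr; exact Real.pow_div_factorial_le_exp _ (Nat.cast_nonneg n) n
    _ = (Real.exp 1 / 6) ^ n := by rw [div_pow, ← Real.exp_one_pow]
    _ ≤ (1 / 2) ^ n := pow_le_pow_left₀ (by positivity) (by linarith [Real.exp_one_lt_d9]) n

lemma choose_mul_two_pow_mul_pow_le {M L n : ℕ} {p : ℝ} (hp : 0 ≤ p) (hpM : 6 * p * M ≤ n)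
    (hL : L + 2 ≤ n) : (M.choose n * 2 ^ L : ℝ) * p ^ n ≤ 1 / 4 :=
  calc (M.choose n * 2 ^ L : ℝ) * p ^ n = 2 ^ L * (M.choose n * p ^ n) := by ring
    _ ≤ 2 ^ L * (1 / 2) ^ (L + 2) := by
        gcongr
        exact (choose_mul_pow_le_half_pow hp hpM).trans
          (pow_le_pow_of_le_one (by norm_num) (by norm_num) hL)
    _ = 1 / 4 := by rw [pow_add, ← mul_assoc, ← mul_pow]; norm_num

lemma card_allCellLabels_lt {d s k : ℕ} (hd : 0 < d) (hs : 2 ≤ s) {p : ℝ}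
    (hp : 2 * Real.log s * ((k + d - 1).choose (d - 1) : ℝ) ^ 3 / s < p) :
    (#(allCellLabels d s k) : ℝ) < p * (s : ℝ) ^ (k * (d - 1)) := by
  set A := (k + d - 1).choose (d - 1)
  set M := s ^ (k * (d - 1))
  have hs0 : (0 : ℝ) < s := by positivity
  have hA : (1 : ℝ) ≤ A := by exact_mod_cast Nat.choose_pos (by omega)
  have hlog : 1 ≤ 2 * Real.log s := by
    have := Real.log_le_log (by norm_num) (show (2 : ℝ) ≤ s by exact_mod_cast hs)
    linarith [Real.log_two_gt_d9]
  have hAp : (A : ℝ) ^ 3 < p * s := by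
    rw [div_lt_iff₀ hs0] at hp
    nlinarith [mul_le_mul_of_nonneg_right hlog (by positivity : (0 : ℝ) ≤ A ^ 3)]
  have hcard : (#(allCellLabels d s k) : ℝ) * s ≤ A ^ 2 * M := by
    exact_mod_cast card_blockTypes hd ▸ card_allCellLabels_mul_le (by omega)
  rw [← Nat.cast_pow]
  refine lt_of_mul_lt_mul_right ?_ hs0.le
  calc (#(allCellLabels d s k) : ℝ) * s ≤ A ^ 3 * M :=
        hcard.trans (mul_le_mul_of_nonneg_right (pow_le_pow_right₀ hA (by norm_num)) M.cast_nonneg)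
    _ < p * s * M := by gcongr
    _ = p * M * s := by ring

lemma card_filter_pairwise_disjoint_le {d s k : ℕ} (hs : 0 < s) {𝓑 : Finset (Set (Fin d → ℝ))}
    (h𝓑 : ↑𝓑 = blockFamily d s k) (n : ℕ) :
    #((𝓑.powersetCard n).filter fun I : Finset (Set (Fin d → ℝ)) =>
        (I : Set (Set (Fin d → ℝ))).Pairwise Disjoint) ≤
      (s ^ (k * (d - 1))).choose n * 2 ^ #(allCellLabels d s k) := by
  rw [coe_eq_image_blockParams h𝓑]
  exact (card_filter_pairwise_powersetCard_image_le _ _ _ n).trans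
    (card_pairwiseDisjoint_blockParams_le hs n)

theorem random_independence_number_general (d s k : ℕ) (hd : 2 ≤ d) (hs : 2 ≤ s)
    (𝓑 : Finset (Set (Fin d → ℝ))) (h𝓑 : ↑𝓑 = blockFamily d s k)
    (p : ℝ) (hp0 : 0 < p) (hp1 : p < 1)
    (hplow : 2 * Real.log s * ((k + d - 1).choose (d - 1) : ℝ) ^ 3 / (s : ℝ) < p)
    (hpM : 3 ≤ p * (s : ℝ) ^ (k * (d - 1))) :
    (3 / 4 : ℝ) ≤ randomSubsetProb 𝓑 p
      (fun X => ∀ I ⊆ X, (↑I : Set (Set (Fin d → ℝ))).Pairwise Disjoint →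
        (I.card : ℝ) ≤ 6 * p * (s : ℝ) ^ (k * (d - 1))) := by
  set M := s ^ (k * (d - 1))
  set n := ⌊6 * p * (M : ℝ)⌋₊ + 1
  have hMcast : (s : ℝ) ^ (k * (d - 1)) = M := by simp only [M, Nat.cast_pow]
  have hn : 6 * p * M < n := by simpa [n] using Nat.lt_floor_add_one (6 * p * (M : ℝ))
  have hL := card_allCellLabels_lt (by omega) hs hplow
  rw [hMcast] at hpM hL ⊢
  have hLn : #(allCellLabels d s k) + 2 ≤ n := by
    exact_mod_cast (show (#(allCellLabels d s k) : ℝ) + 2 < n by linarith).le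
  calc (3 / 4 : ℝ) ≤ 1 - (M.choose n * 2 ^ #(allCellLabels d s k) : ℝ) * p ^ n := by
        linarith [choose_mul_two_pow_mul_pow_le hp0.le hn.le hLn]
    _ ≤ _ := by gcongr; exact_mod_cast card_filter_pairwise_disjoint_le (by omega) h𝓑 n
    _ ≤ _ := one_sub_card_mul_pow_le_randomSubsetProb 𝓑 hp0.le hp1.le Disjoint (by positivity)

/-- If each block of `𝓑` is kept independently with probability `p`, where
`s ≥ |T|³`, `p > 2·(log s)·|T|³/s` and `p·M ≥ 3` (with `|T| = C(k+d-1, d-1)` and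
`M = s^{k(d-1)}`), then with probability at least `3/4` the subgraph `H` of the
intersection graph induced on the random subfamily `X` satisfies `α(H) ≤ 6·p·M`,
i.e. every pairwise disjoint subfamily `I ⊆ X` has at most `6·p·M` members. -/
theorem random_independence_number (d s k : ℕ) (hd : 2 ≤ d) (hs : 2 ≤ s) (hk : 1 ≤ k)
    (𝓑 : Finset (Set (Fin d → ℝ))) (h𝓑 : ↑𝓑 = blockFamily d s k)
    (hsT : ((k + d - 1).choose (d - 1)) ^ 3 ≤ s)
    (p : ℝ) (hp0 : 0 < p) (hp1 : p < 1)
    (hplow : 2 * Real.log s * ((k + d - 1).choose (d - 1) : ℝ) ^ 3 / (s : ℝ) < p)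
    (hpM : 3 ≤ p * (s : ℝ) ^ (k * (d - 1))) :
    (3 / 4 : ℝ) ≤ randomSubsetProb 𝓑 p
      (fun X => ∀ I ⊆ X, (↑I : Set (Set (Fin d → ℝ))).Pairwise Disjoint →
        (I.card : ℝ) ≤ 6 * p * (s : ℝ) ^ (k * (d - 1))) :=
  random_independence_number_general d s k hd hs 𝓑 h𝓑 p hp0 hp1 hplow hpM
end
end

section
/- Every point of the half-open cube [0,m)^d lies in exactly one t-block of 𝓑 for each t ∈ T, and consequently the clique number of G equals |T| = C(k+d−1, d−1). -/
/-! The `t`-block containing `x` is the one with `p i = ⌊x i / s ^ t i⌋`, so for each shape `t`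
the blocks of `𝓑` partition `[0, s^k)^d`; in particular two distinct blocks of the same shape are
disjoint, and a clique contains at most one block of each shape. Conversely the blocks
`B_t(0)`, `t ∈ T`, are pairwise distinct and all contain the origin. -/

open scoped Classical

noncomputable section

open Finset

section Blocks

variable {d s : ℕ} {t : Fin d → ℕ} {p p' : Fin d → ℤ} {x : Fin d → ℝ}

lemma mem_block_iff :
    x ∈ block d s t p ↔ ∀ i, x i ∈ Set.Ico ((s : ℝ) ^ t i * p i) ((s : ℝ) ^ t i * (p i + 1)) :=
  Set.mem_univ_pi

lemma mem_Ico_mul_iff_floor_div_eq {c y : ℝ} (hc : 0 < c) {n : ℤ} :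
    y ∈ Set.Ico (c * n) (c * (n + 1)) ↔ ⌊y / c⌋ = n := by
  rw [Int.floor_eq_iff, le_div_iff₀ hc, div_lt_iff₀ hc, Set.mem_Ico, mul_comm c, mul_comm c]

lemma mem_block_iff_eq_floor (hs : 0 < s) :
    x ∈ block d s t p ↔ p = fun i => ⌊x i / (s : ℝ) ^ t i⌋ := by
  rw [mem_block_iff, funext_iff]
  exact forall_congr' fun i => (mem_Ico_mul_iff_floor_div_eq (by positivity)).trans eq_comm

lemma eq_of_mem_block_of_mem_block (hs : 0 < s) (h : x ∈ block d s t p)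
    (h' : x ∈ block d s t p') : p = p' :=
  ((mem_block_iff_eq_floor hs).1 h).trans ((mem_block_iff_eq_floor hs).1 h').symm

lemma floor_div_pow_lt_pow_sub (hs : 0 < s) {a k : ℕ} (hak : a ≤ k) {y : ℝ}
    (hy : y < (s : ℝ) ^ k) : ⌊y / (s : ℝ) ^ a⌋ < (s : ℤ) ^ (k - a) := by
  rw [Int.floor_lt, div_lt_iff₀ (by positivity)]
  push_cast
  rwa [← pow_add, Nat.sub_add_cancel hak]

theorem existsUnique_mem_block (hs : 0 < s) {k : ℕ} (hx : ∀ i, 0 ≤ x i ∧ x i < (s : ℝ) ^ k)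
    (ht : ∀ i, t i ≤ k) :
    ∃! p : Fin d → ℤ, (∀ i, 0 ≤ p i ∧ p i < (s : ℤ) ^ (k - t i)) ∧ x ∈ block d s t p := by
  refine ⟨_, ⟨fun i => ⟨?_, ?_⟩, (mem_block_iff_eq_floor hs).2 rfl⟩,
    fun q hq => (mem_block_iff_eq_floor hs).1 hq.2⟩
  · exact Int.floor_nonneg.2 (div_nonneg (hx i).1 (by positivity))
  · exact floor_div_pow_lt_pow_sub hs (ht i) (hx i).2

lemma zero_mem_block_zero (hs : 0 < s) : 0 ∈ block d s t 0 := by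
  simp only [mem_block_iff, Pi.zero_apply, Int.cast_zero, mul_zero, zero_add, mul_one,
    Set.left_mem_Ico]
  intro i
  positivity

lemma block_zero_injective (hs : 1 < s) :
    Function.Injective fun t : Fin d → ℕ => block d s t 0 := by
  intro t t' h
  funext i
  have hne (u : Fin d → ℕ) : (block d s u 0).Nonempty := ⟨0, zero_mem_block_zero (by omega)⟩
  have hI : Function.eval i '' block d s t 0 = Function.eval i '' block d s t' 0 := congrArg _ h
  unfold block at hI
  rw [Set.eval_image_univ_pi (hne t), Set.eval_image_univ_pi (hne t')] at hI
  simp only [Pi.zero_apply, Int.cast_zero, mul_zero, zero_add, mul_one] at hI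
  have hpow := ((Set.Ico_eq_Ico_iff (Or.inl (by positivity))).1 hI).2
  exact pow_right_injective₀ (by positivity) (by exact_mod_cast hs.ne') hpow

end Blocks

lemma card_piAntidiag_univ_fin (d k : ℕ) :
    #(piAntidiag (univ : Finset (Fin d)) k) = d.multichoose k := by
  rw [← map_sym_eq_piAntidiag, card_map, sym_univ, card_univ, Sym.card_sym_fin_eq_multichoose]

section BlockFamily

variable {d s k : ℕ}

lemma block_zero_mem_blockFamily (hs : 0 < s) {t : Fin d → ℕ} (ht : ∑ i, t i = k) :
    block d s t 0 ∈ blockFamily d s k :=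
  ⟨t, 0, ht, fun i => ⟨le_rfl, by positivity⟩, rfl⟩

theorem card_le_of_pairwise_inter_nonempty (hs : 0 < s) {S : Finset (Set (Fin d → ℝ))}
    (hS : ↑S ⊆ blockFamily d s k)
    (hpair : (↑S : Set (Set (Fin d → ℝ))).Pairwise fun B B' => (B ∩ B').Nonempty) :
    #S ≤ #(piAntidiag (univ : Finset (Fin d)) k) := by
  choose! t p hsum _ hblk using hS
  refine card_le_card_of_injOn t (fun B hB => mem_piAntidiag.2 ⟨hsum hB, by simp⟩) ?_
  intro B hB B' hB' htt
  by_contra hne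
  obtain ⟨x, hxB, hxB'⟩ := hpair hB hB' hne
  rw [hblk hB] at hxB
  rw [hblk hB', ← htt] at hxB'
  rw [hblk hB, hblk hB', ← htt, eq_of_mem_block_of_mem_block hs hxB hxB'] at hne
  exact hne rfl

end BlockFamily

theorem clique_number_of_blockFamily_general (d s k : ℕ) (hd : 2 ≤ d) (hs : 2 ≤ s) :
    (∀ x : Fin d → ℝ, (∀ i, 0 ≤ x i ∧ x i < (s : ℝ) ^ k) →
      ∀ t : Fin d → ℕ, (∑ i, t i) = k →
        ∃! p : Fin d → ℤ,
          (∀ i, 0 ≤ p i ∧ p i < (s : ℤ) ^ (k - t i)) ∧ x ∈ block d s t p) ∧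
    (∃ S : Finset (Set (Fin d → ℝ)), ↑S ⊆ blockFamily d s k ∧
      S.card = (k + d - 1).choose (d - 1) ∧
      ((↑S : Set (Set (Fin d → ℝ))).Pairwise fun B B' => (B ∩ B').Nonempty)) ∧
    (∀ S : Finset (Set (Fin d → ℝ)), ↑S ⊆ blockFamily d s k →
      ((↑S : Set (Set (Fin d → ℝ))).Pairwise fun B B' => (B ∩ B').Nonempty) →
      S.card ≤ (k + d - 1).choose (d - 1)) := by
  have hs0 : 0 < s := by omega
  have hT : #(piAntidiag (univ : Finset (Fin d)) k) = (k + d - 1).choose (d - 1) := by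
    rw [card_piAntidiag_univ_fin, Nat.multichoose_eq, add_comm d k]
    exact Nat.choose_symm_of_eq_add (by omega)
  refine ⟨fun x hx t ht => existsUnique_mem_block hs0 hx fun i => ?_,
    ⟨(piAntidiag univ k).image (block d s · 0), ?_, ?_, ?_⟩,
    fun S hS hpair => hT ▸ card_le_of_pairwise_inter_nonempty hs0 hS hpair⟩
  · exact ht ▸ single_le_sum (fun j _ => Nat.zero_le (t j)) (mem_univ i)
  · simp only [coe_image, Set.image_subset_iff]
    exact fun t ht => block_zero_mem_blockFamily hs0 (mem_piAntidiag.1 ht).1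
  · rw [card_image_of_injective _ (block_zero_injective (by omega)), hT]
  · simp only [coe_image]
    rintro _ ⟨t, -, rfl⟩ _ ⟨t', -, rfl⟩ -
    exact ⟨0, zero_mem_block_zero hs0, zero_mem_block_zero hs0⟩

/-- Every point of `[0, s^k)^d` lies in exactly one `t`-block of `𝓑` for each `t ∈ T`,
and consequently the clique number of the intersection graph of `𝓑` equals
`|T| = C(k+d-1, d-1)`: there is a pairwise intersecting subfamily of that size, and
every pairwise intersecting subfamily has at most that many members. -/
theorem clique_number_of_blockFamily (d s k : ℕ) (hd : 2 ≤ d) (hs : 2 ≤ s) (hk : 1 ≤ k) :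
    (∀ x : Fin d → ℝ, (∀ i, 0 ≤ x i ∧ x i < (s : ℝ) ^ k) →
      ∀ t : Fin d → ℕ, (∑ i, t i) = k →
        ∃! p : Fin d → ℤ,
          (∀ i, 0 ≤ p i ∧ p i < (s : ℤ) ^ (k - t i)) ∧ x ∈ block d s t p) ∧
    (∃ S : Finset (Set (Fin d → ℝ)), ↑S ⊆ blockFamily d s k ∧
      S.card = (k + d - 1).choose (d - 1) ∧
      ((↑S : Set (Set (Fin d → ℝ))).Pairwise fun B B' => (B ∩ B').Nonempty)) ∧
    (∀ S : Finset (Set (Fin d → ℝ)), ↑S ⊆ blockFamily d s k →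
      ((↑S : Set (Set (Fin d → ℝ))).Pairwise fun B B' => (B ∩ B').Nonempty) →
      S.card ≤ (k + d - 1).choose (d - 1)) :=
  clique_number_of_blockFamily_general d s k hd hs
end
end

section
/- There exist q ≤ |T|²·M/s pairs (X₁,Y₁),…,(X_q,Y_q) of disjoint subsets of 𝓑 such that every element of X_i intersects every element of Y_i for each i, and every edge of G (i.e., every unordered pair of distinct intersecting blocks of 𝓑) lies between X_i and Y_i for exactly one index i. In other words, G is the edge-disjoint union of at most |T|²·M/s complete bipartite graphs. -/
/-!
Two blocks `B_t(p)` and `B_u(q)` meet iff they lie in the same `(t ⊔ u)`-block, i.e. iff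
`p / s^(t ⊔ u - t) = q / s^(t ⊔ u - u)` coordinatewise. So for each pair of types `t < u` (in
lexicographic order) and each `(t ⊔ u)`-block `C` of `[0, m]^d`, the `t`-blocks and the `u`-blocks
inside `C` span a complete bipartite subgraph, and these bicliques partition the edges of `G`.
Distinct types `t, u` of weight `k` give `t ⊔ u` of weight at least `k + 1`, so for each of the
fewer than `|T|²` pairs there are at most `s^(dk - k - 1) = M / s` blocks `C`.
-/

open scoped Classical

noncomputable section

open Finset

lemma Finset.Nat.card_antidiagonalTuple_s15 (d k : ℕ) :
    #(Nat.antidiagonalTuple d k) = Nat.multichoose d k := by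
  rw [← Fintype.card_coe, Fintype.card_congr
    ((Equiv.subtypeEquivRight fun _ => Nat.mem_antidiagonalTuple).trans
      (Sym.equivNatSumOfFintype (Fin d) k).symm),
    Sym.card_sym_eq_multichoose, Fintype.card_fin]

lemma Finset.sum_lt_sum_sup {ι M : Type*} [Fintype ι] [AddCommMonoid M] [LinearOrder M]
    [IsOrderedCancelAddMonoid M] {t u : ι → M} (hsum : ∑ i, t i = ∑ i, u i) (htu : t ≠ u) :
    ∑ i, t i < ∑ i, (t ⊔ u) i := by
  refine (sum_le_sum fun i _ => le_sup_left).lt_of_ne fun heq => htu ?_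
  have hut : ∀ i ∈ univ, u i ≤ t i := fun i hi =>
    ((sum_eq_sum_iff_of_le fun i _ => le_sup_left).1 heq i hi).symm ▸ le_sup_right
  funext i
  exact ((sum_eq_sum_iff_of_le hut).1 hsum.symm i (mem_univ i)).symm

lemma mem_Ico_mul_iff_floor_div_eq_s15 {r x : ℝ} (hr : 0 < r) (p : ℤ) :
    x ∈ Set.Ico (r * p) (r * (p + 1)) ↔ ⌊x / r⌋ = p := by
  rw [Int.floor_eq_iff, Set.mem_Ico, le_div_iff₀ hr, div_lt_iff₀ hr, mul_comm _ r, mul_comm _ r]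

lemma floor_div_pow_eq_ediv {s : ℕ} (x : ℝ) {a b : ℕ} (hab : a ≤ b) :
    ⌊x / (s : ℝ) ^ b⌋ = ⌊x / (s : ℝ) ^ a⌋ / (s : ℤ) ^ (b - a) := by
  have h := Int.floor_div_natCast (x / (s : ℝ) ^ a) (s ^ (b - a))
  push_cast at h
  rwa [div_div, ← pow_add, Nat.add_sub_cancel' hab] at h

lemma Ico_pow_inter_nonempty_iff {s : ℕ} (hs : 0 < s) (a b : ℕ) (p q : ℤ) :
    (Set.Ico ((s : ℝ) ^ a * p) ((s : ℝ) ^ a * (p + 1)) ∩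
      Set.Ico ((s : ℝ) ^ b * q) ((s : ℝ) ^ b * (q + 1))).Nonempty ↔
      p / (s : ℤ) ^ (max a b - a) = q / (s : ℤ) ^ (max a b - b) := by
  have hpow (n : ℕ) : (0 : ℝ) < (s : ℝ) ^ n := by positivity
  simp only [Set.Nonempty, Set.mem_inter_iff, mem_Ico_mul_iff_floor_div_eq_s15 (hpow _)]
  constructor
  · rintro ⟨x, rfl, rfl⟩
    rw [← floor_div_pow_eq_ediv x (le_max_left a b), ← floor_div_pow_eq_ediv x (le_max_right a b)]
  wlog hab : a ≤ b generalizing a b p q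
  · intro h
    obtain ⟨x, hq, hp⟩ := this b a q p (le_of_not_ge hab) (by rwa [max_comm, eq_comm])
    exact ⟨x, hp, hq⟩
  rw [max_eq_right hab, Nat.sub_self, pow_zero, Int.ediv_one]
  rintro rfl
  have hcorner : ⌊(s : ℝ) ^ a * p / (s : ℝ) ^ a⌋ = p := by
    rw [mul_div_cancel_left₀ _ (hpow a).ne', Int.floor_intCast]
  exact ⟨(s : ℝ) ^ a * p, hcorner, by rw [floor_div_pow_eq_ediv _ hab, hcorner]⟩

lemma Ico_pow_eq_Ico_pow_iff {s : ℕ} (hs : 2 ≤ s) {a b : ℕ} {p q : ℤ} :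
    Set.Ico ((s : ℝ) ^ a * p) ((s : ℝ) ^ a * (p + 1)) =
      Set.Ico ((s : ℝ) ^ b * q) ((s : ℝ) ^ b * (q + 1)) ↔ a = b ∧ p = q := by
  refine ⟨fun h => ?_, by rintro ⟨rfl, rfl⟩; rfl⟩
  have hpow (n : ℕ) : (0 : ℝ) < (s : ℝ) ^ n := by positivity
  obtain ⟨hl, hr⟩ := (Set.Ico_eq_Ico_iff (Or.inl (by nlinarith [hpow a]))).1 h
  have hab : a = b := pow_right_injective₀ (a := (s : ℝ)) (by positivity) (by norm_cast; omega)
    (by linear_combination hr - hl)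
  subst hab
  exact ⟨rfl, by exact_mod_cast mul_left_cancel₀ (hpow a).ne' hl⟩

variable {d s k : ℕ}

/-- Index of the `v`-block containing `B_t(p)`, for `t ≤ v`. -/
def parentIndex (s : ℕ) (t v : Fin d → ℕ) (p : Fin d → ℤ) : Fin d → ℤ :=
  fun i => p i / (s : ℤ) ^ (v i - t i)

lemma block_inter_nonempty_iff (hs : 0 < s) (t u : Fin d → ℕ) (p q : Fin d → ℤ) :
    (block d s t p ∩ block d s u q).Nonempty ↔
      parentIndex s t (t ⊔ u) p = parentIndex s u (t ⊔ u) q := by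
  rw [block, block, ← Set.pi_inter_distrib, Set.univ_pi_nonempty_iff, funext_iff]
  exact forall_congr' fun i => Ico_pow_inter_nonempty_iff hs (t i) (u i) (p i) (q i)

lemma block_eq_block_iff (hs : 2 ≤ s) {t u : Fin d → ℕ} {p q : Fin d → ℤ} :
    block d s t p = block d s u q ↔ t = u ∧ p = q := by
  refine ⟨fun h => ?_, by rintro ⟨rfl, rfl⟩; rfl⟩
  have hs0 : (0 : ℝ) < s := Nat.cast_pos.2 (by omega)
  have hne : (block d s t p).Nonempty := Set.univ_pi_nonempty_iff.2 fun i =>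
    Set.nonempty_Ico.2 (by nlinarith [pow_pos hs0 (t i)])
  unfold block at h hne
  have hcoord (i : Fin d) : t i = u i ∧ p i = q i := (Ico_pow_eq_Ico_pow_iff hs).1 <| by
    have hT := Set.eval_image_univ_pi (i := i) hne
    have hU := Set.eval_image_univ_pi (i := i) (h ▸ hne)
    rw [h] at hT
    exact hT.symm.trans hU
  simp only [funext_iff, ← forall_and]
  exact hcoord

def blockIndices (d s k : ℕ) (t : Fin d → ℕ) : Finset (Fin d → ℤ) :=
  Fintype.piFinset fun i => Finset.Ico 0 ((s : ℤ) ^ (k - t i))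

lemma card_blockIndices (t : Fin d → ℕ) : #(blockIndices d s k t) = s ^ ∑ i, (k - t i) := by
  simp only [blockIndices, Fintype.card_piFinset, Int.card_Ico, sub_zero, ← prod_pow_eq_pow_sum]
  norm_cast

lemma parentIndex_mem_blockIndices (hs : 0 < s) {t v : Fin d → ℕ} (htv : t ≤ v)
    (hv : ∀ i, v i ≤ k) {p : Fin d → ℤ} (hp : p ∈ blockIndices d s k t) :
    parentIndex s t v p ∈ blockIndices d s k v := by
  simp only [blockIndices, Fintype.mem_piFinset, Finset.mem_Ico] at hp ⊢
  intro i
  have hpow : (s : ℤ) ^ (k - t i) = (s : ℤ) ^ (k - v i) * (s : ℤ) ^ (v i - t i) := by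
    have hti : t i ≤ v i := htv i
    rw [← pow_add, Nat.sub_add_sub_cancel (hv i) hti]
  refine ⟨Int.ediv_nonneg (hp i).1 (by positivity), ?_⟩
  exact Int.ediv_lt_of_lt_mul (by positivity) (hpow ▸ (hp i).2)

lemma parentIndex_self (t : Fin d → ℕ) (p : Fin d → ℤ) : parentIndex s t t p = p := by
  funext i
  simp [parentIndex]

lemma mem_blockFamily_iff {B : Set (Fin d → ℝ)} :
    B ∈ blockFamily d s k ↔
      ∃ t ∈ Nat.antidiagonalTuple d k, ∃ p ∈ blockIndices d s k t, B = block d s t p := by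
  simp [blockFamily, blockIndices, Nat.mem_antidiagonalTuple]

lemma sup_apply_le_of_mem_antidiagonalTuple {t u : Fin d → ℕ}
    (ht : t ∈ Nat.antidiagonalTuple d k) (hu : u ∈ Nat.antidiagonalTuple d k) (i : Fin d) :
    (t ⊔ u) i ≤ k := by
  rw [Nat.mem_antidiagonalTuple] at ht hu
  exact max_le (ht ▸ single_le_sum (fun j _ => Nat.zero_le (t j)) (mem_univ i))
    (hu ▸ single_le_sum (fun j _ => Nat.zero_le (u j)) (mem_univ i))

lemma mul_card_blockIndices_sup_le (hs : 0 < s) {t u : Fin d → ℕ}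
    (ht : t ∈ Nat.antidiagonalTuple d k) (hu : u ∈ Nat.antidiagonalTuple d k) (htu : t ≠ u) :
    s * #(blockIndices d s k (t ⊔ u)) ≤ s ^ (k * (d - 1)) := by
  have hsplit : ∑ i, (k - (t ⊔ u) i) + ∑ i, (t ⊔ u) i = d * k := by
    rw [← sum_add_distrib, sum_congr rfl fun i _ =>
      Nat.sub_add_cancel (sup_apply_le_of_mem_antidiagonalTuple ht hu i)]
    simp
  rw [Nat.mem_antidiagonalTuple] at ht hu
  have hlt := sum_lt_sum_sup (ht.trans hu.symm) htu
  rw [card_blockIndices, ← pow_succ']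
  refine Nat.pow_le_pow_right hs ?_
  rw [Nat.mul_sub_one, mul_comm k d]
  omega

def typePairs (d k : ℕ) : Finset ((Fin d → ℕ) × (Fin d → ℕ)) :=
  (Nat.antidiagonalTuple d k ×ˢ Nat.antidiagonalTuple d k).filter
    fun tu => toLex tu.1 < toLex tu.2

def bicliqueIndex (d s k : ℕ) : Finset ((Fin d → ℕ) × (Fin d → ℕ) × (Fin d → ℤ)) :=
  (typePairs d k).biUnion fun tu =>
    (blockIndices d s k (tu.1 ⊔ tu.2)).image fun c => (tu.1, tu.2, c)

lemma mem_bicliqueIndex {t u : Fin d → ℕ} {c : Fin d → ℤ} :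
    (t, u, c) ∈ bicliqueIndex d s k ↔ t ∈ Nat.antidiagonalTuple d k ∧
      u ∈ Nat.antidiagonalTuple d k ∧ toLex t < toLex u ∧ c ∈ blockIndices d s k (t ⊔ u) := by
  simp [bicliqueIndex, typePairs, and_assoc]

lemma mul_card_bicliqueIndex_le (hs : 0 < s) :
    s * #(bicliqueIndex d s k) ≤ Nat.multichoose d k ^ 2 * s ^ (k * (d - 1)) := by
  calc s * #(bicliqueIndex d s k)
      ≤ s * ∑ tu ∈ typePairs d k, #(blockIndices d s k (tu.1 ⊔ tu.2)) := by
        gcongr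
        exact card_biUnion_le.trans (sum_le_sum fun _ _ => card_image_le)
    _ ≤ ∑ _tu ∈ typePairs d k, s ^ (k * (d - 1)) := by
        rw [mul_sum]
        refine sum_le_sum fun tu htu => ?_
        simp only [typePairs, mem_filter, mem_product] at htu
        exact mul_card_blockIndices_sup_le hs htu.1.1 htu.1.2 (toLex.injective.ne htu.2.ne)
    _ ≤ #(Nat.antidiagonalTuple d k ×ˢ Nat.antidiagonalTuple d k) * s ^ (k * (d - 1)) := by
        rw [sum_const, smul_eq_mul]
        exact Nat.mul_le_mul_right _ (card_filter_le _ _)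
    _ = Nat.multichoose d k ^ 2 * s ^ (k * (d - 1)) := by
        rw [card_product, Nat.card_antidiagonalTuple_s15, sq]

def bicliqueSide (d s k : ℕ) (t u : Fin d → ℕ) (c : Fin d → ℤ) : Set (Set (Fin d → ℝ)) :=
  {B | ∃ p ∈ blockIndices d s k t, parentIndex s t (t ⊔ u) p = c ∧ B = block d s t p}

lemma block_mem_bicliqueSide_iff (hs : 2 ≤ s) {t' t u : Fin d → ℕ} {p c : Fin d → ℤ} :
    block d s t' p ∈ bicliqueSide d s k t u c ↔
      t' = t ∧ p ∈ blockIndices d s k t ∧ parentIndex s t (t ⊔ u) p = c := by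
  constructor
  · rintro ⟨p', hp', hc, h⟩
    obtain ⟨rfl, rfl⟩ := (block_eq_block_iff hs).1 h
    exact ⟨rfl, hp', hc⟩
  · rintro ⟨rfl, hp, hc⟩
    exact ⟨p, hp, hc, rfl⟩

lemma bicliqueSide_subset_blockFamily {t : Fin d → ℕ} (ht : t ∈ Nat.antidiagonalTuple d k)
    (u : Fin d → ℕ) (c : Fin d → ℤ) : bicliqueSide d s k t u c ⊆ blockFamily d s k := by
  rintro _ ⟨p, hp, -, rfl⟩
  exact mem_blockFamily_iff.2 ⟨t, ht, p, hp, rfl⟩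

lemma disjoint_bicliqueSide (hs : 2 ≤ s) {t u : Fin d → ℕ} (htu : t ≠ u) (c c' : Fin d → ℤ) :
    Disjoint (bicliqueSide d s k t u c) (bicliqueSide d s k u t c') := by
  rw [Set.disjoint_left]
  rintro _ ⟨p, -, -, rfl⟩ hp
  exact htu ((block_mem_bicliqueSide_iff hs).1 hp).1

lemma inter_nonempty_of_mem_bicliqueSide (hs : 0 < s) {t u : Fin d → ℕ} {c : Fin d → ℤ}
    {B B' : Set (Fin d → ℝ)} (hB : B ∈ bicliqueSide d s k t u c)
    (hB' : B' ∈ bicliqueSide d s k u t c) : (B ∩ B').Nonempty := by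
  obtain ⟨p, -, hp, rfl⟩ := hB
  obtain ⟨q, -, hq, rfl⟩ := hB'
  rw [block_inter_nonempty_iff hs, hp, sup_comm, hq]

def bicliqueLeft (d s k : ℕ) (j : (Fin d → ℕ) × (Fin d → ℕ) × (Fin d → ℤ)) :
    Set (Set (Fin d → ℝ)) :=
  bicliqueSide d s k j.1 j.2.1 j.2.2

def bicliqueRight (d s k : ℕ) (j : (Fin d → ℕ) × (Fin d → ℕ) × (Fin d → ℤ)) :
    Set (Set (Fin d → ℝ)) :=
  bicliqueSide d s k j.2.1 j.1 j.2.2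

lemma existsUnique_biclique (hs : 2 ≤ s) {B B' : Set (Fin d → ℝ)} (hB : B ∈ blockFamily d s k)
    (hB' : B' ∈ blockFamily d s k) (hne : B ≠ B') (hBB' : (B ∩ B').Nonempty) :
    ∃! j : bicliqueIndex d s k, (B ∈ bicliqueLeft d s k j ∧ B' ∈ bicliqueRight d s k j) ∨
      (B ∈ bicliqueRight d s k j ∧ B' ∈ bicliqueLeft d s k j) := by
  obtain ⟨t, ht, p, hp, rfl⟩ := mem_blockFamily_iff.1 hB
  obtain ⟨u, hu, q, hq, rfl⟩ := mem_blockFamily_iff.1 hB'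
  rw [block_inter_nonempty_iff (by omega)] at hBB'
  have htu : t ≠ u := by
    rintro rfl
    rw [sup_idem, parentIndex_self, parentIndex_self] at hBB'
    exact hne (hBB' ▸ rfl)
  wlog hlt : toLex t < toLex u generalizing t u p q
  · have hgt := (le_of_not_gt hlt).lt_of_ne (toLex.injective.ne htu.symm)
    simpa only [or_comm, and_comm] using
      this u hu q hq hB' t ht p hp hB hne.symm (by rw [sup_comm]; exact hBB'.symm) htu.symm hgt
  have hc : (t, u, parentIndex s t (t ⊔ u) p) ∈ bicliqueIndex d s k :=
    mem_bicliqueIndex.2 ⟨ht, hu, hlt, parentIndex_mem_blockIndices (by omega) le_sup_left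
      (sup_apply_le_of_mem_antidiagonalTuple ht hu) hp⟩
  refine ⟨⟨_, hc⟩, Or.inl ⟨(block_mem_bicliqueSide_iff hs).2 ⟨rfl, hp, rfl⟩,
    (block_mem_bicliqueSide_iff hs).2 ⟨rfl, hq, by dsimp only; rw [sup_comm, hBB']⟩⟩, ?_⟩
  rintro ⟨⟨t', u', c⟩, hj⟩ hcover
  obtain ⟨-, -, hlt', -⟩ := mem_bicliqueIndex.1 hj
  simp only [bicliqueLeft, bicliqueRight, block_mem_bicliqueSide_iff hs] at hcover
  rcases hcover with ⟨⟨rfl, -, rfl⟩, rfl, -⟩ | ⟨⟨rfl, -⟩, rfl, -⟩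
  · rfl
  · exact absurd hlt hlt'.asymm

theorem complete_bipartite_decomposition_general (d s k : ℕ) (hd : 2 ≤ d) (hs : 2 ≤ s) :
    ∃ q : ℕ, ∃ X Y : Fin q → Set (Set (Fin d → ℝ)),
      (q : ℝ) ≤ ((k + d - 1).choose (d - 1) : ℝ) ^ 2 * (s : ℝ) ^ (k * (d - 1)) / (s : ℝ) ∧
      (∀ i, X i ⊆ blockFamily d s k ∧ Y i ⊆ blockFamily d s k ∧ Disjoint (X i) (Y i)) ∧
      (∀ i, ∀ B ∈ X i, ∀ B' ∈ Y i, (B ∩ B').Nonempty) ∧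
      (∀ B ∈ blockFamily d s k, ∀ B' ∈ blockFamily d s k, B ≠ B' → (B ∩ B').Nonempty →
        ∃! i : Fin q, (B ∈ X i ∧ B' ∈ Y i) ∨ (B ∈ Y i ∧ B' ∈ X i)) := by
  let e := (bicliqueIndex d s k).equivFin.symm
  refine ⟨_, fun i => bicliqueLeft d s k (e i), fun i => bicliqueRight d s k (e i), ?_, ?_, ?_, ?_⟩
  · have hchoose : Nat.multichoose d k = (k + d - 1).choose (d - 1) := by
      rw [Nat.multichoose_eq, add_comm d k]
      exact Nat.choose_symm_of_eq_add (by omega)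
    rw [le_div_iff₀ (by positivity), mul_comm, ← hchoose]
    exact_mod_cast mul_card_bicliqueIndex_le (by omega)
  · intro i
    obtain ⟨ht, hu, hlt, -⟩ := mem_bicliqueIndex.1 (e i).2
    exact ⟨bicliqueSide_subset_blockFamily ht _ _, bicliqueSide_subset_blockFamily hu _ _,
      disjoint_bicliqueSide hs (toLex.injective.ne hlt.ne) _ _⟩
  · exact fun i B hB B' hB' => inter_nonempty_of_mem_bicliqueSide (by omega) hB hB'
  · exact fun B hB B' hB' hne hBB' =>
      e.existsUnique_congr_right.2 (existsUnique_biclique hs hB hB' hne hBB')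

/-- The intersection graph of `𝓑` is the edge-disjoint union of at most `|T|²·M/s`
complete bipartite graphs (with `|T| = C(k+d-1, d-1)` and `M = s^{k(d-1)}`): there are
`q ≤ |T|²·M/s` pairs `(Xᵢ, Yᵢ)` of disjoint subsets of `𝓑` such that every member of
`Xᵢ` intersects every member of `Yᵢ`, and every unordered pair of distinct intersecting
blocks of `𝓑` lies between `Xᵢ` and `Yᵢ` for exactly one index `i`. -/
theorem complete_bipartite_decomposition (d s k : ℕ) (hd : 2 ≤ d) (hs : 2 ≤ s)
    (hk : 1 ≤ k) :
    ∃ q : ℕ, ∃ X Y : Fin q → Set (Set (Fin d → ℝ)),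
      (q : ℝ) ≤ ((k + d - 1).choose (d - 1) : ℝ) ^ 2 * (s : ℝ) ^ (k * (d - 1)) / (s : ℝ) ∧
      (∀ i, X i ⊆ blockFamily d s k ∧ Y i ⊆ blockFamily d s k ∧ Disjoint (X i) (Y i)) ∧
      (∀ i, ∀ B ∈ X i, ∀ B' ∈ Y i, (B ∩ B').Nonempty) ∧
      (∀ B ∈ blockFamily d s k, ∀ B' ∈ blockFamily d s k, B ≠ B' → (B ∩ B').Nonempty →
        ∃! i : Fin q, (B ∈ X i ∧ B' ∈ Y i) ∨ (B ∈ Y i ∧ B' ∈ X i)) :=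
  complete_bipartite_decomposition_general d s k hd hs
end
end
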